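/- The number of reducible (over ℚ) integer polynomials of degree 2 and height at most Q is at least c·Q² log Q for some absolute constant c > 0 and all sufficiently large Q. -/

import Mathlib

open Polynomial

/-- The (naive) height of an integer polynomial. -/
def polyHeight (p : Polynomial ℤ) : ℕ := p.support.sup fun i => (p.coeff i).natAbs

/-- An integer polynomial is reducible over ℚ if it factors into two polynomials
of positive degree with rational coefficients. -/
def ReducibleOverQ (p : Polynomial ℤ) : Prop :=
  ∃ f g : Polynomial ℚ, p.map (Int.castRingHom ℚ) = f * g ∧
    1 ≤ f.natDegree ∧ 1 ≤ g.natDegree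

/-- For even m, the totient is at most m/2. -/
lemma totient_le_half {k : ℕ} (hk : 0 < k) : Nat.totient (2 * k) ≤ k := by
  rw [Nat.totient_eq_card_coprime]
  have h : (Finset.filter (fun a => (2*k).Coprime a) (Finset.range (2*k))).card ≤ (Finset.range k).card := by
    apply Finset.card_le_card_of_injOn (fun x => x / 2)
    · intro x hx
      simp only [Finset.mem_coe, Finset.mem_filter, Finset.mem_range] at hx ⊢
      obtain ⟨hxlt, hcop⟩ := hx
      have hodd : x % 2 = 1 := by
        rcases Nat.even_or_odd x with he | ho
        · exfalso
          have h2 : (2:ℕ) ∣ Nat.gcd (2*k) x := Nat.dvd_gcd (dvd_mul_right 2 k) he.two_dvd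
          rw [hcop] at h2; omega
        · exact Nat.odd_iff.mp ho
      omega
    · intro x hx y hy hxy
      simp only [Finset.coe_filter, Set.mem_setOf_eq, Finset.mem_range] at hx hy
      have hox : x % 2 = 1 := by
        rcases Nat.even_or_odd x with he | ho
        · exfalso
          have h2 : (2:ℕ) ∣ Nat.gcd (2*k) x := Nat.dvd_gcd (dvd_mul_right 2 k) he.two_dvd
          rw [hx.2] at h2; omega
        · exact Nat.odd_iff.mp ho
      have hoy : y % 2 = 1 := by
        rcases Nat.even_or_odd y with he | ho
        · exfalso
          have h2 : (2:ℕ) ∣ Nat.gcd (2*k) y := Nat.dvd_gcd (dvd_mul_right 2 k) he.two_dvd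
          rw [hy.2] at h2; omega
        · exact Nat.odd_iff.mp ho
      simp only at hxy
      omega
  simpa using h

/-- Dirichlet-swap identity: ∑_{m≤M} φ(m)⌊M/m⌋ = ∑_{n≤M} n. -/
lemma sum_totient_mul_div (M : ℕ) :
    ∑ m ∈ Finset.Ioc 0 M, Nat.totient m * (M / m) = ∑ n ∈ Finset.Ioc 0 M, n := by
  calc ∑ m ∈ Finset.Ioc 0 M, Nat.totient m * (M / m)
      = ∑ m ∈ Finset.Ioc 0 M, ∑ n ∈ (Finset.Ioc 0 M).filter (m ∣ ·), Nat.totient m := by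
        refine Finset.sum_congr rfl fun m _ => ?_
        rw [Finset.sum_const, Nat.Ioc_filter_dvd_card_eq_div, smul_eq_mul, mul_comm]
    _ = ∑ m ∈ Finset.Ioc 0 M, ∑ n ∈ Finset.Ioc 0 M, if m ∣ n then Nat.totient m else 0 := by
        refine Finset.sum_congr rfl fun m _ => ?_
        rw [Finset.sum_filter]
    _ = ∑ n ∈ Finset.Ioc 0 M, ∑ m ∈ Finset.Ioc 0 M, if m ∣ n then Nat.totient m else 0 :=
        Finset.sum_comm
    _ = ∑ n ∈ Finset.Ioc 0 M, ∑ m ∈ (Finset.Ioc 0 M).filter (· ∣ n), Nat.totient m := by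
        refine Finset.sum_congr rfl fun n _ => ?_
        rw [Finset.sum_filter]
    _ = ∑ n ∈ Finset.Ioc 0 M, ∑ m ∈ n.divisors, Nat.totient m := by
        refine Finset.sum_congr rfl fun n hn => ?_
        simp only [Finset.mem_Ioc] at hn
        congr 1
        ext m
        simp only [Finset.mem_filter, Finset.mem_Ioc, Nat.mem_divisors]
        constructor
        · rintro ⟨⟨h1, h2⟩, h3⟩; exact ⟨h3, by omega⟩
        · rintro ⟨h1, h2⟩
          have hm : 0 < m := Nat.pos_of_dvd_of_pos h1 hn.1
          have : m ≤ n := Nat.le_of_dvd hn.1 h1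
          exact ⟨⟨hm, le_trans this hn.2⟩, h1⟩
    _ = ∑ n ∈ Finset.Ioc 0 M, n := by
        refine Finset.sum_congr rfl fun n _ => Nat.sum_totient n


lemma sum_Ioc_id (M : ℕ) : 2 * ∑ n ∈ Finset.Ioc 0 M, n = M * (M+1) := by
  induction M with
  | zero => simp
  | succ M ih =>
    rw [← Finset.sum_Ioc_consecutive _ (Nat.zero_le M) (Nat.le_succ M)]
    have : Finset.Ioc M (M+1) = {M+1} := by
      ext x; simp only [Finset.mem_Ioc, Finset.mem_singleton]; omega
    rw [this, Finset.sum_singleton, Nat.mul_add, ih]; ring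

lemma T_lower (M : ℕ) (hM : 1 ≤ M) :
    ((M:ℝ)+1)/2 ≤ ∑ m ∈ Finset.Ioc 0 M, (Nat.totient m : ℝ)/m := by
  have hM0 : (0:ℝ) < M := by exact_mod_cast hM
  have key : ((∑ m ∈ Finset.Ioc 0 M, Nat.totient m * (M / m) : ℕ) : ℝ)
      ≤ (∑ m ∈ Finset.Ioc 0 M, (Nat.totient m : ℝ)/m) * M := by
    push_cast
    rw [Finset.sum_mul]
    apply Finset.sum_le_sum
    intro m hm
    simp only [Finset.mem_Ioc] at hm
    have hm0 : (0:ℝ) < m := by exact_mod_cast hm.1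
    have h1 : ((M / m : ℕ) : ℝ) ≤ (M:ℝ)/m := Nat.cast_div_le
    have h2 : (0:ℝ) ≤ Nat.totient m := Nat.cast_nonneg _
    calc (Nat.totient m : ℝ) * ((M / m : ℕ) : ℝ) ≤ (Nat.totient m : ℝ) * ((M:ℝ)/m) :=
          mul_le_mul_of_nonneg_left h1 h2
      _ = (Nat.totient m : ℝ)/m * M := by field_simp
  have hgauss : ((∑ m ∈ Finset.Ioc 0 M, Nat.totient m * (M / m) : ℕ) : ℝ)
      = (M:ℝ) * (M+1) / 2 := by
    rw [sum_totient_mul_div]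
    have h2 := sum_Ioc_id M
    have h3 : 2 * ((∑ n ∈ Finset.Ioc 0 M, n : ℕ) : ℝ) = (M:ℝ)*((M:ℝ)+1) := by
      exact_mod_cast h2
    linarith
  rw [hgauss] at key
  rw [div_le_iff₀ (by norm_num : (0:ℝ) < 2)] at *
  nlinarith [key]

lemma T_upper (M : ℕ) :
    ∑ m ∈ Finset.Ioc 0 M, (Nat.totient m : ℝ)/m ≤ (3*(M:ℝ)+2)/4 := by
  have hstep : ∑ m ∈ Finset.Ioc 0 M, (Nat.totient m : ℝ)/m
      ≤ ∑ m ∈ Finset.Ioc 0 M, (if 2 ∣ m then (1:ℝ)/2 else 1) := by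
    apply Finset.sum_le_sum
    intro m hm
    simp only [Finset.mem_Ioc] at hm
    have hm0 : (0:ℝ) < m := by exact_mod_cast hm.1
    split_ifs with h
    · obtain ⟨k, rfl⟩ := h
      have hk : 0 < k := by omega
      have := totient_le_half hk
      rw [div_le_div_iff₀ hm0 (by norm_num)]
      push_cast
      have h4 : (((2*k : ℕ)).totient : ℝ) ≤ (k:ℝ) := by exact_mod_cast this
      push_cast at h4
      linarith
    · rw [div_le_one hm0]
      exact_mod_cast Nat.totient_le m
  refine hstep.trans ?_
  rw [Finset.sum_ite]
  simp only [Finset.sum_const, nsmul_eq_mul, mul_one]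
  have hc1 : (Finset.filter (fun m => 2 ∣ m) (Finset.Ioc 0 M)).card = M / 2 :=
    Nat.Ioc_filter_dvd_card_eq_div M 2
  have hc2 : (Finset.filter (fun m => ¬ 2 ∣ m) (Finset.Ioc 0 M)).card = M - M / 2 := by
    have htot := Finset.card_filter_add_card_filter_not
      (s := Finset.Ioc 0 M) (p := fun m => 2 ∣ m)
    simp only [Nat.card_Ioc, Nat.sub_zero] at htot
    omega
  rw [hc1, hc2]
  have h1 : ((M / 2 : ℕ) : ℝ) ≤ (M:ℝ)/2 := Nat.cast_div_le
  have h2 : ((M - M/2 : ℕ) : ℝ) ≤ ((M:ℝ)+1)/2 := by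
    have : 2 * (M - M/2) ≤ M + 1 := by omega
    have := (by exact_mod_cast this : (2:ℝ) * ((M - M/2 : ℕ):ℝ) ≤ (M:ℝ) + 1)
    linarith
  linarith

lemma block_bound (K : ℕ) (hK : 1 ≤ K) :
    (1:ℝ)/8 ≤ ∑ m ∈ Finset.Ioc K (2*K), (Nat.totient m : ℝ)/m^2 := by
  have hK0 : (0:ℝ) < K := by exact_mod_cast hK
  have hsplit := Finset.sum_Ioc_consecutive (fun m => (Nat.totient m : ℝ)/m)
    (Nat.zero_le K) (by omega : K ≤ 2*K)
  have hlow := T_lower (2*K) (by omega)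
  have hup := T_upper K
  push_cast at hlow
  have hdiff : (K:ℝ)/4 ≤ ∑ m ∈ Finset.Ioc K (2*K), (Nat.totient m : ℝ)/m := by
    linarith
  have hpt : ∀ m ∈ Finset.Ioc K (2*K),
      ((Nat.totient m : ℝ)/m) * (1/(2*K)) ≤ (Nat.totient m : ℝ)/m^2 := by
    intro m hm
    simp only [Finset.mem_Ioc] at hm
    have hm0 : (0:ℝ) < m := by
      have : 0 < m := by omega
      exact_mod_cast this
    have h1 : (m:ℝ) ≤ 2*(K:ℝ) := by exact_mod_cast hm.2
    have e1 : (Nat.totient m:ℝ)/m^2 = ((Nat.totient m:ℝ)/m) * (1/m) := by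
      rw [div_mul_div_comm, mul_one, ← pow_two]
    rw [e1]
    apply mul_le_mul_of_nonneg_left _ (by positivity)
    apply one_div_le_one_div_of_le hm0 h1
  calc (1:ℝ)/8 = ((K:ℝ)/4) * (1/(2*K)) := by field_simp; ring
    _ ≤ (∑ m ∈ Finset.Ioc K (2*K), (Nat.totient m : ℝ)/m) * (1/(2*K)) :=
        mul_le_mul_of_nonneg_right hdiff (by positivity)
    _ = ∑ m ∈ Finset.Ioc K (2*K), ((Nat.totient m : ℝ)/m) * (1/(2*K)) := Finset.sum_mul _ _ _
    _ ≤ ∑ m ∈ Finset.Ioc K (2*K), (Nat.totient m : ℝ)/m^2 := Finset.sum_le_sum hpt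


lemma S2_pow (J : ℕ) :
    (J:ℝ)/8 ≤ ∑ m ∈ Finset.Ioc 0 (2^J), (Nat.totient m : ℝ)/m^2 := by
  induction J with
  | zero =>
    simp only [Nat.cast_zero, zero_div]
    apply Finset.sum_nonneg; intro m _; positivity
  | succ J ih =>
    have hsplit := Finset.sum_Ioc_consecutive (fun m => (Nat.totient m : ℝ)/m^2)
      (Nat.zero_le (2^J)) (Nat.pow_le_pow_right (by norm_num) (Nat.le_succ J))
    have hblock := block_bound (2^J) (Nat.one_le_two_pow)
    have h2 : 2 * 2^J = 2^(J+1) := by ring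
    rw [h2] at hblock
    push_cast
    linarith

lemma S2_ge (M : ℕ) (hM : 1 ≤ M) :
    (Nat.log 2 M : ℝ)/8 ≤ ∑ m ∈ Finset.Ioc 0 M, (Nat.totient m : ℝ)/m^2 := by
  refine (S2_pow (Nat.log 2 M)).trans ?_
  apply Finset.sum_le_sum_of_subset_of_nonneg
  · apply Finset.Ioc_subset_Ioc_right
    exact Nat.pow_log_le_self 2 (by omega)
  · intro m _ _; positivity

lemma S2_Ioc_one (M : ℕ) (hM : 1 ≤ M) :
    (Nat.log 2 M : ℝ)/8 - 1 ≤ ∑ m ∈ Finset.Ioc 1 M, (Nat.totient m : ℝ)/m^2 := by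
  have hsplit := Finset.sum_Ioc_consecutive (fun m => (Nat.totient m : ℝ)/m^2)
    (Nat.zero_le 1) hM
  have h1 : ∑ m ∈ Finset.Ioc 0 1, (Nat.totient m : ℝ)/m^2 = 1 := by
    norm_num [Finset.Ioc_self]
  have := S2_ge M hM
  linarith


noncomputable def qp (v u z w : ℕ) : Polynomial ℤ :=
  Polynomial.C ((v*w : ℕ) : ℤ) * Polynomial.X^2 + Polynomial.C ((v*z + u*w : ℕ) : ℤ) * Polynomial.X
    + Polynomial.C ((u*z : ℕ) : ℤ)

lemma qp_coeff2 (v u z w : ℕ) : (qp v u z w).coeff 2 = ((v*w : ℕ) : ℤ) := by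
  simp only [qp, Polynomial.coeff_add, Polynomial.coeff_C_mul, Polynomial.coeff_X_pow,
    Polynomial.coeff_C, Polynomial.coeff_X]
  norm_num

lemma qp_coeff1 (v u z w : ℕ) : (qp v u z w).coeff 1 = ((v*z + u*w : ℕ) : ℤ) := by
  simp only [qp, Polynomial.coeff_add, Polynomial.coeff_C_mul, Polynomial.coeff_X_pow,
    Polynomial.coeff_C, Polynomial.coeff_X]
  norm_num

lemma qp_coeff0 (v u z w : ℕ) : (qp v u z w).coeff 0 = ((u*z : ℕ) : ℤ) := by
  simp only [qp, Polynomial.coeff_add, Polynomial.coeff_C_mul, Polynomial.coeff_X_pow,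
    Polynomial.coeff_C, Polynomial.coeff_X]
  norm_num

lemma qp_natDegree {v u z w : ℕ} (hv : 0 < v) (hw : 0 < w) : (qp v u z w).natDegree = 2 := by
  apply Polynomial.natDegree_quadratic
  simp only [ne_eq, Nat.cast_eq_zero]
  positivity

lemma qp_reducible {v u z w : ℕ} (hv : 0 < v) (hw : 0 < w) : ReducibleOverQ (qp v u z w) := by
  refine ⟨Polynomial.C (v:ℚ) * Polynomial.X + Polynomial.C (u:ℚ),
    Polynomial.C (w:ℚ) * Polynomial.X + Polynomial.C (z:ℚ), ?_, ?_, ?_⟩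
  · simp only [qp, Polynomial.map_add, Polynomial.map_mul, Polynomial.map_pow,
      Polynomial.map_C, Polynomial.map_X, Int.coe_castRingHom]
    push_cast
    rw [Polynomial.C_mul, Polynomial.C_add, Polynomial.C_mul, Polynomial.C_mul, Polynomial.C_mul]
    ring
  · rw [Polynomial.natDegree_linear (by exact_mod_cast hv.ne')]
  · rw [Polynomial.natDegree_linear (by exact_mod_cast hw.ne')]

lemma qp_height {Q v u z w : ℕ} (hv : 0 < v) (hw : 0 < w)
    (h2 : v*w ≤ Q) (h1 : v*z + u*w ≤ Q) (h0 : u*z ≤ Q) : polyHeight (qp v u z w) ≤ Q := by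
  apply Finset.sup_le
  intro i hi
  have hideg : i ≤ 2 := by
    rw [← qp_natDegree hv hw (u := u) (z := z)]
    exact Polynomial.le_natDegree_of_ne_zero (Polynomial.mem_support_iff.mp hi)
  interval_cases i
  · rw [qp_coeff0]; exact (Int.natAbs_natCast _).trans_le h0
  · rw [qp_coeff1]; exact (Int.natAbs_natCast _).trans_le h1
  · rw [qp_coeff2]; exact (Int.natAbs_natCast _).trans_le h2


lemma sq_sub_identity (a b : ℕ) (h : b ≤ a) : (a+b)^2 = (a-b)^2 + 4*(a*b) := by
  obtain ⟨d, rfl⟩ := Nat.exists_eq_add_of_le h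
  rw [Nat.add_sub_cancel_left]
  ring

lemma qp_inj {v u z w v' u' z' w' : ℕ}
    (hu : 0 < u) (huv : u < v) (hcop : Nat.Coprime v u)
    (hw : 0 < w) (hwz : w ≤ z)
    (hu' : 0 < u') (huv' : u' < v') (hcop' : Nat.Coprime v' u')
    (hw' : 0 < w') (hwz' : w' ≤ z')
    (heq : qp v u z w = qp v' u' z' w') :
    v = v' ∧ u = u' ∧ z = z' ∧ w = w' := by
  have h2 : v*w = v'*w' := by
    have := congrArg (fun p => Polynomial.coeff p 2) heq
    simp only [qp_coeff2] at this; exact_mod_cast this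
  have h1 : v*z + u*w = v'*z' + u'*w' := by
    have := congrArg (fun p => Polynomial.coeff p 1) heq
    simp only [qp_coeff1] at this; exact_mod_cast this
  have h0 : u*z = u'*z' := by
    have := congrArg (fun p => Polynomial.coeff p 0) heq
    simp only [qp_coeff0] at this; exact_mod_cast this
  -- products of "roots"
  have hP : (v*z) * (u*w) = (v'*z') * (u'*w') := by
    calc (v*z) * (u*w) = (v*w) * (u*z) := by ring
      _ = (v'*w') * (u'*z') := by rw [h2, h0]
      _ = (v'*z') * (u'*w') := by ring
  have hle : u*w ≤ v*z := Nat.mul_le_mul (le_of_lt huv) hwz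
  have hle' : u'*w' ≤ v'*z' := Nat.mul_le_mul (le_of_lt huv') hwz'
  have hsq : (v*z - u*w)^2 = (v'*z' - u'*w')^2 := by
    have e1 := sq_sub_identity (v*z) (u*w) hle
    have e2 := sq_sub_identity (v'*z') (u'*w') hle'
    rw [h1] at e1
    rw [e2] at e1
    omega
  have hdiff : v*z - u*w = v'*z' - u'*w' :=
    Nat.pow_left_injective (by norm_num) hsq
  have hA : v*z = v'*z' := by omega
  have hB : u*w = u'*w' := by omega
  -- now deduce component equalities
  have hz0 : 0 < z := lt_of_lt_of_le hw hwz
  have hz0' : 0 < z' := lt_of_lt_of_le hw' hwz'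
  have hv0 : 0 < v := lt_trans hu huv
  have hcross : u * v' = u' * v := by
    have : (u*z) * (v'*z') = (u'*z') * (v*z) := by rw [h0, hA]
    have h := this
    have : (u * v') * (z * z') = (u' * v) * (z * z') := by ring_nf; ring_nf at h; linarith [h]
    exact Nat.eq_of_mul_eq_mul_right (Nat.mul_pos hz0 hz0') this
  have hvv' : v = v' := by
    have hd1 : v ∣ v' := by
      have : v ∣ v' * u := ⟨u', by linarith [hcross, Nat.mul_comm u v']⟩
      exact (Nat.Coprime.dvd_of_dvd_mul_right hcop this)
    have hd2 : v' ∣ v := by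
      have : v' ∣ v * u' := ⟨u, by linarith [hcross]⟩
      exact (Nat.Coprime.dvd_of_dvd_mul_right hcop' this)
    exact Nat.dvd_antisymm hd1 hd2
  subst hvv'
  have hz : z = z' := Nat.eq_of_mul_eq_mul_left hv0 hA
  have hwv : w = w' := Nat.eq_of_mul_eq_mul_left hv0 h2
  have hu'' : u = u' := Nat.eq_of_mul_eq_mul_right hz0 (by rw [hz] at h0 ⊢; exact h0)
  exact ⟨rfl, hu'', hz, hwv⟩


def paramSet (Q : ℕ) : Finset ((_ : ℕ) × (_ : ℕ) × (_ : ℕ) × ℕ) :=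
  (Finset.Ioc 1 (Q/4)).sigma (fun v =>
    ((Finset.range v).filter (fun u => Nat.Coprime v u)).sigma (fun _u =>
      (Finset.Icc 1 (Q/(2*v))).sigma (fun z => Finset.Icc 1 z)))

lemma mem_paramSet {Q : ℕ} {t : (_ : ℕ) × (_ : ℕ) × (_ : ℕ) × ℕ} (ht : t ∈ paramSet Q) :
    1 < t.1 ∧ t.1 ≤ Q/4 ∧ t.2.1 < t.1 ∧ 0 < t.2.1 ∧ Nat.Coprime t.1 t.2.1 ∧
    1 ≤ t.2.2.1 ∧ t.2.2.1 ≤ Q/(2*t.1) ∧ 1 ≤ t.2.2.2 ∧ t.2.2.2 ≤ t.2.2.1 := by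
  obtain ⟨v, u, z, w⟩ := t
  simp only [paramSet, Finset.mem_sigma, Finset.mem_Ioc, Finset.mem_filter,
    Finset.mem_range, Finset.mem_Icc] at ht
  obtain ⟨⟨hv1, hv2⟩, ⟨hu1, hu2⟩, ⟨hz1, hz2⟩, hw1, hw2⟩ := ht
  refine ⟨hv1, hv2, hu1, ?_, hu2, hz1, hz2, hw1, hw2⟩
  rcases Nat.eq_zero_or_pos u with h | h
  · subst h
    rw [Nat.coprime_zero_right] at hu2
    omega
  · exact h

lemma card_paramSet (Q : ℕ) :
    (paramSet Q).card =
      ∑ v ∈ Finset.Ioc 1 (Q/4), Nat.totient v * ∑ z ∈ Finset.Icc 1 (Q/(2*v)), z := by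
  rw [paramSet, Finset.card_sigma]
  refine Finset.sum_congr rfl fun v _ => ?_
  rw [Finset.card_sigma]
  have hcard : ∀ u ∈ (Finset.range v).filter (fun u => Nat.Coprime v u),
      ((Finset.Icc 1 (Q/(2*v))).sigma (fun z => Finset.Icc 1 z)).card
        = ∑ z ∈ Finset.Icc 1 (Q/(2*v)), z := by
    intro u _
    rw [Finset.card_sigma]
    refine Finset.sum_congr rfl fun z _ => ?_
    rw [Nat.card_Icc]; omega
  rw [Finset.sum_congr rfl hcard, Finset.sum_const, Nat.totient_eq_card_coprime, smul_eq_mul]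

-- finiteness
lemma natAbs_coeff_le (p : Polynomial ℤ) (i : ℕ) : (p.coeff i).natAbs ≤ polyHeight p := by
  by_cases h : i ∈ p.support
  · exact Finset.le_sup (f := fun i => (p.coeff i).natAbs) h
  · rw [Polynomial.notMem_support_iff.mp h]; simp

lemma S_finite (Q : ℕ) :
    {p : Polynomial ℤ | p.natDegree = 2 ∧ polyHeight p ≤ Q ∧ ReducibleOverQ p}.Finite := by
  have hsub : {p : Polynomial ℤ | p.natDegree = 2 ∧ polyHeight p ≤ Q ∧ ReducibleOverQ p} ⊆
      (fun t : ℤ × ℤ × ℤ => Polynomial.monomial 2 t.1 + Polynomial.monomial 1 t.2.1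
        + Polynomial.monomial 0 t.2.2) ''
      (Set.Icc (-(Q:ℤ)) Q ×ˢ Set.Icc (-(Q:ℤ)) Q ×ˢ Set.Icc (-(Q:ℤ)) Q) := by
    rintro p ⟨hdeg, hht, -⟩
    refine ⟨(p.coeff 2, p.coeff 1, p.coeff 0), ?_, ?_⟩
    · have b2 := le_trans (natAbs_coeff_le p 2) hht
      have b1 := le_trans (natAbs_coeff_le p 1) hht
      have b0 := le_trans (natAbs_coeff_le p 0) hht
      simp only [Set.mem_prod, Set.mem_Icc]
      refine ⟨⟨?_, ?_⟩, ⟨?_, ?_⟩, ?_, ?_⟩ <;> omega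
    · have h3 : p.natDegree < 3 := by omega
      have hsum := Polynomial.as_sum_range' p 3 h3
      dsimp only
      calc (Polynomial.monomial 2) (p.coeff 2) + (Polynomial.monomial 1) (p.coeff 1)
            + (Polynomial.monomial 0) (p.coeff 0)
          = ∑ i ∈ Finset.range 3, (Polynomial.monomial i) (p.coeff i) := by
            rw [Finset.sum_range_succ, Finset.sum_range_succ, Finset.sum_range_one]; abel
        _ = p := hsum.symm
  exact Set.Finite.subset (Set.Finite.image _ ((Set.finite_Icc _ _).prod
    ((Set.finite_Icc _ _).prod (Set.finite_Icc _ _)))) hsub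


lemma Icc_one_eq_Ioc (n : ℕ) : Finset.Icc 1 n = Finset.Ioc 0 n := by
  ext x; simp [Finset.mem_Icc, Finset.mem_Ioc]; omega

-- per-v estimate
lemma per_v (Q v : ℕ) (hv1 : 1 < v) (hv2 : v ≤ Q/4) :
    (Q:ℝ)^2/32 * ((Nat.totient v : ℝ) / (v:ℝ)^2)
      ≤ (Nat.totient v : ℝ) * ((∑ z ∈ Finset.Icc 1 (Q/(2*v)), z : ℕ) : ℝ) := by
  set K := Q/(2*v) with hK
  have hv0 : (0:ℝ) < v := by exact_mod_cast (by omega : 0 < v)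
  have h4v : (v:ℝ)*4 ≤ Q := by exact_mod_cast (Nat.le_div_iff_mul_le (by norm_num)).mp hv2
  have hQlt : (Q:ℝ) < ((K:ℝ)+1)*(2*v) := by
    have := (Nat.div_lt_iff_lt_mul (show 0 < 2*v by omega)).mp (Nat.lt_succ_self (Q/(2*v)))
    exact_mod_cast this
  have hKl : (Q:ℝ)/(4*v) ≤ K := by
    rw [div_le_iff₀ (by positivity)]
    nlinarith
  have hG : 2 * (((∑ z ∈ Finset.Icc 1 K, z : ℕ)) : ℝ) = (K:ℝ)*((K:ℝ)+1) := by
    rw [Icc_one_eq_Ioc]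
    exact_mod_cast sum_Ioc_id K
  have hK0 : (0:ℝ) ≤ K := Nat.cast_nonneg _
  have hGge : (Q:ℝ)^2/(32*(v:ℝ)^2) ≤ (((∑ z ∈ Finset.Icc 1 K, z : ℕ)) : ℝ) := by
    have hsq : ((Q:ℝ)/(4*v))^2 ≤ (K:ℝ)^2 := by
      apply pow_le_pow_left₀ (by positivity) hKl
    have heq : ((Q:ℝ)/(4*v))^2 = (Q:ℝ)^2/(16*(v:ℝ)^2) := by
      rw [div_pow, mul_pow]; norm_num
    have hKK : (K:ℝ)^2 ≤ 2 * (((∑ z ∈ Finset.Icc 1 K, z : ℕ)) : ℝ) := by nlinarith [hK0]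
    rw [heq] at hsq
    have h32 : (Q:ℝ)^2/(32*(v:ℝ)^2) = ((Q:ℝ)^2/(16*(v:ℝ)^2))/2 := by ring
    linarith
  have hphi : (0:ℝ) ≤ (Nat.totient v : ℝ) := Nat.cast_nonneg _
  calc (Q:ℝ)^2/32 * ((Nat.totient v : ℝ) / (v:ℝ)^2)
      = (Nat.totient v : ℝ) * ((Q:ℝ)^2/(32*(v:ℝ)^2)) := by field_simp
    _ ≤ _ := mul_le_mul_of_nonneg_left hGge hphi

-- the log estimate
lemma log_est (Q : ℕ) (hQ : 2^20 ≤ Q) :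
    (32:ℝ)/1000 * Real.log Q ≤ (Nat.log 2 (Q/4) : ℝ)/8 - 1 := by
  set L := Nat.log 2 (Q/4) with hL
  set LQ := Nat.log 2 Q with hLQ
  have hQ1 : (1:ℝ) ≤ Q := by exact_mod_cast (by omega : 1 ≤ Q)
  have hlogQ : (13:ℝ) ≤ Real.log Q := by
    have h1 : ((2:ℝ)^20) ≤ (Q:ℝ) := by exact_mod_cast hQ
    have h2 : Real.log ((2:ℝ)^20) ≤ Real.log Q := Real.log_le_log (by positivity) h1
    rw [Real.log_pow] at h2
    have := Real.log_two_gt_d9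
    push_cast at h2
    nlinarith
  -- LQ ≥ log Q / log 2 - 1
  have hQlt : (Q:ℝ) < 2^(LQ+1) := by exact_mod_cast Nat.lt_pow_succ_log_self (by norm_num) Q
  have hlogup : Real.log Q ≤ ((LQ:ℝ)+1) * Real.log 2 := by
    have := Real.log_le_log (by positivity) hQlt.le
    rw [Real.log_pow] at this
    push_cast at this
    exact this
  -- L ≥ LQ - 2
  have hLge : (LQ:ℝ) - 2 ≤ L := by
    have h20 : 20 ≤ LQ := by
      rw [hLQ]
      have : 2^20 ≤ Q := hQ
      exact (Nat.le_log_iff_pow_le (by norm_num) (by omega)).mpr this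
    have hpow : 2^(LQ - 2) ≤ Q/4 := by
      have h1 : 2^LQ ≤ Q := Nat.pow_log_le_self 2 (by omega)
      have h2 : 2^(LQ-2) = 2^LQ/4 := by
        rw [show (4:ℕ) = 2^2 by norm_num, Nat.pow_div (by omega) (by norm_num)]
      rw [h2]
      exact Nat.div_le_div_right h1
    have hnat : LQ - 2 ≤ L := (Nat.le_log_iff_pow_le (by norm_num) (by omega)).mpr hpow
    have hc : ((LQ - 2 : ℕ) : ℝ) ≤ (L:ℝ) := by exact_mod_cast hnat
    rw [Nat.cast_sub (by omega : 2 ≤ LQ)] at hc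
    exact_mod_cast hc
  have hlog2u : Real.log 2 < 0.6931472 := lt_trans Real.log_two_lt_d9 (by norm_num)
  have hmul : ((LQ:ℝ)+1) * Real.log 2 ≤ ((LQ:ℝ)+1) * 0.6931472 := by
    have h0 : (0:ℝ) ≤ (LQ:ℝ)+1 := by positivity
    exact mul_le_mul_of_nonneg_left hlog2u.le h0
  linarith


theorem count_reducible_deg_two_lower :
    ∃ c : ℝ, 0 < c ∧ ∃ Q₀ : ℕ, ∀ Q : ℕ, Q₀ ≤ Q →
      c * (Q : ℝ) ^ 2 * Real.log Q ≤
        (Set.ncard {p : Polynomial ℤ | p.natDegree = 2 ∧ polyHeight p ≤ Q ∧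
          ReducibleOverQ p} : ℝ) := by
  refine ⟨1/1000, by norm_num, 2^20, fun Q hQ => ?_⟩
  set S := {p : Polynomial ℤ | p.natDegree = 2 ∧ polyHeight p ≤ Q ∧ ReducibleOverQ p} with hS
  set F : ((_ : ℕ) × (_ : ℕ) × (_ : ℕ) × ℕ) → Polynomial ℤ :=
    fun t => qp t.1 t.2.1 t.2.2.1 t.2.2.2 with hF
  -- image is inside S
  have hmem : ∀ t ∈ paramSet Q, F t ∈ S := by
    intro t ht
    obtain ⟨hv1, hv2, huv, hu0, hcop, hz1, hz2, hw1, hw2⟩ := mem_paramSet ht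
    obtain ⟨v, u, z, w⟩ := t
    simp only at hv1 hv2 huv hu0 hcop hz1 hz2 hw1 hw2
    have hz2' : z*(2*v) ≤ Q := (Nat.le_div_iff_mul_le (by omega)).mp hz2
    have hvzQ : v*z ≤ Q := by nlinarith
    have h2 : v*w ≤ Q := le_trans (Nat.mul_le_mul_left v hw2) hvzQ
    have h0 : u*z ≤ Q := le_trans (Nat.mul_le_mul_right z huv.le) hvzQ
    have huw : u*w ≤ v*z := Nat.mul_le_mul huv.le hw2
    have h1 : v*z + u*w ≤ Q := by nlinarith
    have hv0 : 0 < v := by omega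
    have hw0 : 0 < w := by omega
    exact ⟨qp_natDegree hv0 hw0, qp_height hv0 hw0 h2 h1 h0, qp_reducible hv0 hw0⟩
  -- injectivity
  have hinj : Set.InjOn F ↑(paramSet Q) := by
    intro t ht t' ht' h
    have H := mem_paramSet (Finset.mem_coe.mp ht)
    have H' := mem_paramSet (Finset.mem_coe.mp ht')
    obtain ⟨v, u, z, w⟩ := t
    obtain ⟨v', u', z', w'⟩ := t'
    simp only at H H' h
    obtain ⟨hv1, hv2, huv, hu0, hcop, hz1, hz2, hw1, hw2⟩ := H
    obtain ⟨hv1', hv2', huv', hu0', hcop', hz1', hz2', hw1', hw2'⟩ := H'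
    obtain ⟨e1, e2, e3, e4⟩ := qp_inj hu0 huv hcop (by omega) hw2
      hu0' huv' hcop' (by omega) hw2' h
    subst e1; subst e2; subst e3; subst e4; rfl
  -- cardinality comparison
  have hcard_le : ((paramSet Q).card : ℝ) ≤ (S.ncard : ℝ) := by
    have h1 : ((paramSet Q).image F).card = (paramSet Q).card :=
      Finset.card_image_of_injOn hinj
    have h2 : (((paramSet Q).image F : Finset (Polynomial ℤ)) : Set (Polynomial ℤ)) ⊆ S := by
      intro p hp
      simp only [Finset.coe_image, Set.mem_image, Finset.mem_coe] at hp
      obtain ⟨t, ht, rfl⟩ := hp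
      exact hmem t ht
    have h3 := Set.ncard_le_ncard h2 (S_finite Q)
    rw [Set.ncard_coe_finset, h1] at h3
    exact_mod_cast h3
  -- sum lower bound
  have hQ4 : 1 ≤ Q/4 := by
    have : (4:ℕ) ≤ Q := by calc (4:ℕ) ≤ 2^20 := by norm_num
                                _ ≤ Q := hQ
    omega
  have hsum : (Q:ℝ)^2/32 * (∑ v ∈ Finset.Ioc 1 (Q/4), (Nat.totient v : ℝ)/(v:ℝ)^2)
      ≤ ((paramSet Q).card : ℝ) := by
    calc (Q:ℝ)^2/32 * (∑ v ∈ Finset.Ioc 1 (Q/4), (Nat.totient v : ℝ)/(v:ℝ)^2)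
        = ∑ v ∈ Finset.Ioc 1 (Q/4), (Q:ℝ)^2/32 * ((Nat.totient v : ℝ)/(v:ℝ)^2) :=
          Finset.mul_sum _ _ _
      _ ≤ ∑ v ∈ Finset.Ioc 1 (Q/4),
            (Nat.totient v : ℝ) * ((∑ z ∈ Finset.Icc 1 (Q/(2*v)), z : ℕ) : ℝ) := by
          refine Finset.sum_le_sum fun v hv => ?_
          simp only [Finset.mem_Ioc] at hv
          exact per_v Q v hv.1 hv.2
      _ = ((paramSet Q).card : ℝ) := by
          rw [card_paramSet]
          push_cast
          rfl
  have hlogchain : (32:ℝ)/1000 * Real.log Q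
      ≤ ∑ v ∈ Finset.Ioc 1 (Q/4), (Nat.totient v : ℝ)/(v:ℝ)^2 :=
    le_trans (log_est Q hQ) (S2_Ioc_one (Q/4) hQ4)
  have hQ2 : (0:ℝ) ≤ (Q:ℝ)^2/32 := by positivity
  calc (1:ℝ)/1000 * (Q:ℝ)^2 * Real.log Q
      = (Q:ℝ)^2/32 * ((32:ℝ)/1000 * Real.log Q) := by ring
    _ ≤ (Q:ℝ)^2/32 * (∑ v ∈ Finset.Ioc 1 (Q/4), (Nat.totient v : ℝ)/(v:ℝ)^2) :=
        mul_le_mul_of_nonneg_left hlogchain hQ2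
    _ ≤ ((paramSet Q).card : ℝ) := hsum
    _ ≤ (S.ncard : ℝ) := hcard_le
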